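/- The limit map 𝔤 : Y → ℂ is injective and is a homeomorphism onto its image, where ℤ^ℕ carries the order topology of the lexicographic order and ℤ^ℕ × ℝ the product topology. Moreover, for every (s,t) ∈ Y the point 𝔤(s,t) lies in I(E_κ) if and only if (s,t) ∈ X, and 𝔤(s,t) has external address s, i.e. Im(E_κ^{n−1}(𝔤(s,t))) ∈ ((2s_n − 1)π, (2s_n + 1)π) for all n ≥ 1. -/

import Mathlib

/-!
For `(s,t) ∈ Y` and `u` within `π + 2` of `Z(𝓕(s,t))`, the point `u - κ` lies in the slit plane,
`log |u - κ|` is within `2` of `t` and `|arg (u - κ)| ≤ π - 2/5`. So every `𝔤_k`, and hence `𝔤`,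
maps `(s,t)` into the corresponding box around `Z(s,t)`: the imaginary part of `𝔤(s,t)` reads off
`s₁`, its real part is within `2` of `t`, and `𝔤 ∘ 𝓕ⁿ = E_κⁿ ∘ 𝔤` propagates this along orbits.
Since `F` expands distances by a factor `≥ 2` on `[1, ∞)`, two points of `Y` whose images under
`𝔤 ∘ 𝓕ʲ` stay close for `j ≤ m` share their first `m + 1` address entries and have potentials
within `5 · 2⁻ᵐ`; this gives injectivity and continuity of the inverse. Continuity of `𝔤` is
inherited from the `𝔤_k`, since the cylinders form a neighbourhood basis of the lexicographic
order topology. Escape is read off the real parts: `|𝔤(𝓕ⁿ p)| ≥ T(𝓕ⁿ p) - 2` and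
`|E_κ(z)| ≤ e^{Re z} + |κ|`.
-/

open Filter Topology ENNReal

noncomputable section

/-- The space of external addresses: integer sequences (indexed from 0, so index `k`
corresponds to the entry `s_{k+1}` of the paper) with the lexicographic order. -/
abbrev Addr : Type := Lex (ℕ → ℤ)

/-- The shift map `σ` on external addresses. -/
def shiftA (s : Addr) : Addr := toLex (fun n => ofLex s (n + 1))

/-- The model growth function `F(t) = e^t - 1`. -/
def Fexp (t : ℝ) : ℝ := Real.exp t - 1

/-- The model map `𝓕(s,t) = (σ s, F t - 2π |s₂|)`. -/
def Fmod (p : Addr × ℝ) : Addr × ℝ :=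
  (shiftA p.1, Fexp p.2 - 2 * Real.pi * |((ofLex p.1 1 : ℤ) : ℝ)|)

/-- The model set `X̄ = {(s,t) : T(𝓕ⁿ(s,t)) ≥ 0 for all n ≥ 0}`. -/
def Xbar : Set (Addr × ℝ) := {p | ∀ n : ℕ, 0 ≤ (Fmod^[n] p).2}

/-- The model escaping set `X = {(s,t) ∈ X̄ : T(𝓕ⁿ(s,t)) → ∞}`. -/
def Xset : Set (Addr × ℝ) :=
  {p | p ∈ Xbar ∧ Tendsto (fun n : ℕ => (Fmod^[n] p).2) atTop atTop}

/-- The minimal potential `t_s ∈ [0,∞]` of an address (`∞` if `(s,t) ∉ X̄` for all `t ≥ 0`). -/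
def tS (s : Addr) : ℝ≥0∞ :=
  sInf (ENNReal.ofReal '' {t : ℝ | 0 ≤ t ∧ (s, t) ∈ Xbar})

/-- The exponential map `E_κ(z) = e^z + κ`. -/
def Eexp (κ : ℂ) (z : ℂ) : ℂ := Complex.exp z + κ

/-- The escaping set `I(E_κ)`. -/
def escapingSet (κ : ℂ) : Set ℂ :=
  {z | Tendsto (fun n : ℕ => ‖(Eexp κ)^[n] z‖) atTop atTop}

/-- The order topology induced by the lexicographic order on external addresses. -/
instance : TopologicalSpace Addr := Preorder.topology Addr
instance : OrderTopology Addr := ⟨rfl⟩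

/-- The constant `Q(K) = max(log(4(K+π+3)), π+2)`. -/
def Qconst (K : ℝ) : ℝ := max (Real.log (4 * (K + Real.pi + 3))) (Real.pi + 2)

/-- `Y_Q = {(s,t) ∈ X̄ : T(𝓕ⁿ(s,t)) ≥ Q for all n}`. -/
def Yset (Q : ℝ) : Set (Addr × ℝ) :=
  {p | p ∈ Xbar ∧ ∀ n : ℕ, Q ≤ (Fmod^[n] p).2}

/-- `Z(s,t) = t + 2πi s₁`. -/
def Zc (p : Addr × ℝ) : ℂ :=
  (p.2 : ℂ) + 2 * Real.pi * Complex.I * ((ofLex p.1 0 : ℤ) : ℂ)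

/-- The approximating maps `𝔤_k`: `𝔤₀ = Z` and
`𝔤_{k+1}(s,t) = Log(𝔤_k(𝓕(s,t)) - κ) + 2πi s₁`, with `Log` the principal logarithm. -/
def gmap (κ : ℂ) : ℕ → Addr × ℝ → ℂ
  | 0 => Zc
  | k + 1 => fun p =>
      Complex.log (gmap κ k (Fmod p) - κ) + 2 * Real.pi * Complex.I * ((ofLex p.1 0 : ℤ) : ℂ)

open Real

def cylSet (n : ℕ) (s : Addr) : Set Addr := {x | ∀ i ≤ n, ofLex x i = ofLex s i}

theorem cylSet_subset_cylSet {m n : ℕ} (h : m ≤ n) (s : Addr) : cylSet n s ⊆ cylSet m s :=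
  fun _ hx i hi => hx i (hi.trans h)

theorem cylSet_mem_nhds (n : ℕ) (s : Addr) : cylSet n s ∈ 𝓝 s := by
  set l : Addr := toLex (Function.update (ofLex s) (n + 1) (ofLex s (n + 1) - 1))
  set r : Addr := toLex (Function.update (ofLex s) (n + 1) (ofLex s (n + 1) + 1))
  have hl : ∀ i ≤ n, ofLex l i = ofLex s i := fun i hi => Function.update_of_ne (by omega) _ _
  have hr : ∀ i ≤ n, ofLex r i = ofLex s i := fun i hi => Function.update_of_ne (by omega) _ _
  have hls : l < s := (Pi.toLex_update_lt_self_iff (x := ofLex s) (i := n + 1)).2 (by omega)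
  have hsr : s < r := (Pi.lt_toLex_update_self_iff (x := ofLex s) (i := n + 1)).2 (by omega)
  refine mem_of_superset (Ioo_mem_nhds hls hsr) ?_
  rintro x ⟨hlx, hxr⟩
  -- at the first index `≤ n` where `x` and `s` differ, `x` would drop below `l` or exceed `r`
  by_contra hx
  simp only [cylSet, Set.mem_ofPred_eq, not_forall] at hx
  classical
  obtain ⟨hin, hne⟩ := Nat.find_spec hx
  have hpre : ∀ j < Nat.find hx, ofLex x j = ofLex s j := fun j hj => by
    by_contra h
    exact Nat.find_min hx hj ⟨by omega, h⟩
  rcases lt_or_gt_of_ne hne with hlt | hgt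
  · exact hlx.not_gt ⟨_, fun j hj => (hpre j hj).trans (hl j (by omega)).symm,
      hlt.trans_eq (hl _ hin).symm⟩
  · exact hxr.not_gt ⟨_, fun j hj => (hr j (by omega)).trans (hpre j hj).symm,
      (hr _ hin).trans_lt hgt⟩

theorem exists_cylSet_subset_Ioi {a s : Addr} (h : a < s) : ∃ n, cylSet n s ⊆ Set.Ioi a := by
  obtain ⟨i, hpre, hlt⟩ := h
  exact ⟨i, fun x hx => ⟨i, fun j hj => (hpre j hj).trans (hx j hj.le).symm,
    hlt.trans_eq (hx i le_rfl).symm⟩⟩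

theorem exists_cylSet_subset_Iio {s b : Addr} (h : s < b) : ∃ n, cylSet n s ⊆ Set.Iio b := by
  obtain ⟨i, hpre, hlt⟩ := h
  exact ⟨i, fun x hx => ⟨i, fun j hj => (hx j hj.le).trans (hpre j hj),
    (hx i le_rfl).trans_lt hlt⟩⟩

theorem nhds_basis_cylSet (s : Addr) : (𝓝 s).HasBasis (fun _ : ℕ => True) (cylSet · s) := by
  refine ⟨fun U => ⟨fun hU => ?_, fun ⟨n, _, hn⟩ => mem_of_superset (cylSet_mem_nhds n s) hn⟩⟩
  obtain ⟨a, b, ⟨has, hsb⟩, hab⟩ := mem_nhds_iff_exists_Ioo_subset.1 hU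
  obtain ⟨m, hm⟩ := exists_cylSet_subset_Ioi has
  obtain ⟨n, hn⟩ := exists_cylSet_subset_Iio hsb
  exact ⟨max m n, trivial, fun x hx => hab ⟨hm (cylSet_subset_cylSet (le_max_left _ _) s hx),
    hn (cylSet_subset_cylSet (le_max_right _ _) s hx)⟩⟩

@[fun_prop]
theorem continuous_ofLex_apply (i : ℕ) : Continuous fun s : Addr => ofLex s i :=
  ((IsLocallyConstant.iff_eventually_eq _).2 fun s =>
    (nhds_basis_cylSet s).eventually_iff.2 ⟨i, trivial, fun _ hx => hx i le_rfl⟩).continuous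

@[fun_prop]
theorem continuous_shiftA : Continuous shiftA :=
  continuous_iff_continuousAt.2 fun s =>
    ((nhds_basis_cylSet s).tendsto_iff (nhds_basis_cylSet (shiftA s))).2
      fun n _ => ⟨n + 1, trivial, fun _ hx i hi => hx (i + 1) (by omega)⟩

theorem continuous_Fmod : Continuous Fmod := by
  unfold Fmod Fexp
  fun_prop

theorem continuous_Zc : Continuous Zc := by
  unfold Zc
  fun_prop

theorem ofLex_iterate_Fmod_fst (p : Addr × ℝ) (n i : ℕ) :
    ofLex (Fmod^[n] p).1 i = ofLex p.1 (i + n) := by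
  induction n generalizing i with
  | zero => rfl
  | succ n ih =>
    rw [Function.iterate_succ_apply']
    exact (ih (i + 1)).trans (by rw [Nat.add_right_comm, Nat.add_assoc])

theorem iterate_Fmod_succ_snd (p : Addr × ℝ) (n : ℕ) :
    (Fmod^[n + 1] p).2 = Fexp (Fmod^[n] p).2 - 2 * π * |((ofLex p.1 (n + 1) : ℤ) : ℝ)| := by
  rw [Function.iterate_succ_apply', Fmod, ofLex_iterate_Fmod_fst, Nat.add_comm 1 n]

theorem mapsTo_Fmod_Yset (Q : ℝ) : Set.MapsTo Fmod (Yset Q) (Yset Q) :=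
  fun _ hp => ⟨fun n => hp.1 (n + 1), fun n => hp.2 (n + 1)⟩

theorem two_mul_abs_sub_le_abs_exp_sub {x y : ℝ} (hx : 1 ≤ x) (hy : 1 ≤ y) :
    2 * |x - y| ≤ |exp x - exp y| := by
  wlog hxy : y ≤ x generalizing x y
  · rw [abs_sub_comm, abs_sub_comm (exp x)]
    exact this hy hx (le_of_not_ge hxy)
  have hexp : exp x = exp y * exp (x - y) := by rw [← exp_add, add_sub_cancel]
  rw [abs_of_nonneg (sub_nonneg.2 hxy), abs_of_nonneg (sub_nonneg.2 (exp_le_exp.2 hxy)), hexp]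
  nlinarith [add_one_le_exp (x - y), add_one_le_exp y]

theorem pow_two_mul_abs_sub_le {Q : ℝ} (hQ : 1 ≤ Q) {p q : Addr × ℝ} (hp : p ∈ Yset Q)
    (hq : q ∈ Yset Q) {m : ℕ} (hpq : q.1 ∈ cylSet m p.1) :
    2 ^ m * |q.2 - p.2| ≤ |(Fmod^[m] q).2 - (Fmod^[m] p).2| := by
  induction m with
  | zero => simp
  | succ m ih =>
    have hstep : 2 * |(Fmod^[m] q).2 - (Fmod^[m] p).2| ≤
        |(Fmod^[m + 1] q).2 - (Fmod^[m + 1] p).2| := by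
      rw [iterate_Fmod_succ_snd, iterate_Fmod_succ_snd, hpq (m + 1) le_rfl,
        sub_sub_sub_cancel_right, Fexp, Fexp, sub_sub_sub_cancel_right]
      exact two_mul_abs_sub_le_abs_exp_sub (hQ.trans (hq.2 m)) (hQ.trans (hp.2 m))
    calc 2 ^ (m + 1) * |q.2 - p.2| = 2 * (2 ^ m * |q.2 - p.2|) := by ring
      _ ≤ 2 * |(Fmod^[m] q).2 - (Fmod^[m] p).2| := by
        gcongr
        exact ih (cylSet_subset_cylSet m.le_succ _ hpq)
      _ ≤ _ := hstep

theorem abs_arg_le_pi_sub_of_mul_norm_le_abs_im {w : ℂ} {c : ℝ} (hw : w ≠ 0)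
    (h : c * ‖w‖ ≤ |w.im|) : |Complex.arg w| ≤ π - c := by
  have hsin : c ≤ sin (π - |Complex.arg w|) := by
    rw [sin_pi_sub, ← abs_sin_eq_sin_abs_of_abs_le_pi (Complex.abs_arg_le_pi w), Complex.sin_arg,
      abs_div, abs_norm, le_div_iff₀ (norm_pos_iff.2 hw)]
    exact h
  linarith [sin_le (sub_nonneg.2 (Complex.abs_arg_le_pi w))]

/-- `Z` plays the role of `Z(𝓕(s,t)) = F(t) - 2π|s₂| + 2πi s₂`, and `w` that of a perturbation
of it by at most `R`; its logarithm then lies in a fixed box around `t`. -/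
theorem log_estimates_of_norm_sub_le {t c R : ℝ} {Z w : ℂ} (hR : 4 * (R + 1) ≤ exp t)
    (hre : Z.re = exp t - 1 - c) (him : |Z.im| = c) (hre₀ : 0 ≤ Z.re) (hw : ‖w - Z‖ ≤ R) :
    w ∈ Complex.slitPlane ∧ |Complex.arg w| ≤ π - 2 / 5 ∧ |Real.log ‖w‖ - t| ≤ 2 := by
  have hdre := abs_le.1 ((Complex.abs_re_le_norm (w - Z)).trans hw)
  have hdim := abs_le.1 ((Complex.abs_im_le_norm (w - Z)).trans hw)
  have hZ_le : ‖Z‖ ≤ exp t - 1 := by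
    have := Complex.norm_le_abs_re_add_abs_im Z
    rw [abs_of_nonneg hre₀, him, hre] at this
    linarith
  have hZ_ge : exp t - 1 ≤ 2 * ‖Z‖ := by
    linarith [Complex.re_le_norm Z, him ▸ Complex.abs_im_le_norm Z]
  have hw_ge : exp t / 4 ≤ ‖w‖ := by
    linarith [norm_sub_norm_le Z w, norm_sub_rev Z w]
  have hw_le : ‖w‖ ≤ 5 / 4 * exp t := by linarith [norm_sub_norm_le w Z]
  have hw_pos : 0 < ‖w‖ := by linarith [exp_pos t]
  have him_ge : w.re ≤ 0 → exp t / 2 ≤ |w.im| := fun hw_re => by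
    simp only [Complex.sub_re, Complex.sub_im] at hdre hdim
    have := abs_sub_abs_le_abs_sub Z.im w.im
    rw [abs_sub_comm] at this
    linarith [abs_le.2 hdim]
  have hexp2 : 4 ≤ exp 2 := by
    have := add_one_le_exp 1
    rw [show (2 : ℝ) = 1 + 1 by norm_num, exp_add]
    nlinarith
  refine ⟨?_, ?_, ?_⟩
  · rw [Complex.mem_slitPlane_iff]
    by_contra! h
    linarith [him_ge h.1, abs_nonneg w.im, h.2 ▸ abs_zero (α := ℝ), exp_pos t]
  · rcases le_or_gt 0 w.re with hw_re | hw_re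
    · linarith [Complex.abs_arg_le_pi_div_two_iff.2 hw_re, pi_gt_three]
    · refine abs_arg_le_pi_sub_of_mul_norm_le_abs_im (norm_pos_iff.1 hw_pos) ?_
      linarith [him_ge hw_re.le]
  · rw [abs_le, le_sub_iff_add_le, sub_le_iff_le_add, neg_add_eq_sub,
      le_log_iff_exp_le hw_pos, log_le_iff_le_exp hw_pos, exp_sub, add_comm, exp_add]
    constructor
    · rw [div_le_iff₀ (exp_pos 2)]
      nlinarith [exp_pos t]
    · nlinarith [exp_pos t]

theorem four_mul_le_exp_Qconst {K : ℝ} (hK : 0 ≤ K) : 4 * (K + π + 3) ≤ exp (Qconst K) :=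
  (Real.exp_log (by positivity)).ge.trans (exp_le_exp.2 (le_max_left _ _))

theorem one_le_Qconst (K : ℝ) : 1 ≤ Qconst K :=
  le_max_of_le_right (by linarith [pi_pos])

@[simp]
theorem Zc_re (p : Addr × ℝ) : (Zc p).re = p.2 := by simp [Zc]

@[simp]
theorem Zc_im (p : Addr × ℝ) : (Zc p).im = 2 * π * ofLex p.1 0 := by simp [Zc]

theorem log_estimates_of_mem_Yset {K : ℝ} {κ : ℂ} {p : Addr × ℝ} (hκ : ‖κ‖ ≤ K) (hp : p ∈ Yset (Qconst K)) {u : ℂ}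
    (hu : ‖u - Zc (Fmod p)‖ ≤ π + 2) :
    u - κ ∈ Complex.slitPlane ∧ |Complex.arg (u - κ)| ≤ π - 2 / 5 ∧
      |Real.log ‖u - κ‖ - p.2| ≤ 2 := by
  refine log_estimates_of_norm_sub_le (Z := Zc (Fmod p)) (R := K + π + 2)
    (c := 2 * π * |(ofLex p.1 1 : ℝ)|) ?_ ?_ ?_ ?_ ?_
  · calc 4 * (K + π + 2 + 1) = 4 * (K + π + 3) := by ring
      _ ≤ exp (Qconst K) := four_mul_le_exp_Qconst ((norm_nonneg κ).trans hκ)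
      _ ≤ exp p.2 := exp_le_exp.2 (hp.2 0)
  · simp [Fmod, Fexp]
  · simp [Fmod, shiftA, abs_mul, pi_pos.le]
  · exact (Zc_re _).symm ▸ (zero_le_one.trans (one_le_Qconst K)).trans (hp.2 1)
  · calc ‖u - κ - Zc (Fmod p)‖ = ‖(u - Zc (Fmod p)) - κ‖ := by ring_nf
      _ ≤ ‖u - Zc (Fmod p)‖ + ‖κ‖ := norm_sub_le _ _
      _ ≤ K + π + 2 := by linarith

def Zbox (p : Addr × ℝ) : Set ℂ := {z | |(z - Zc p).re| ≤ 2 ∧ |(z - Zc p).im| ≤ π - 2 / 5}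

theorem isClosed_Zbox (p : Addr × ℝ) : IsClosed (Zbox p) :=
  (isClosed_le (f := fun z => |(z - Zc p).re|) (by fun_prop) continuous_const).inter
    (isClosed_le (f := fun z => |(z - Zc p).im|) (by fun_prop) continuous_const)

theorem norm_sub_Zc_le_of_mem_Zbox {p : Addr × ℝ} {z : ℂ} (hz : z ∈ Zbox p) :
    ‖z - Zc p‖ ≤ π + 2 := by
  linarith [Complex.norm_le_abs_re_add_abs_im (z - Zc p), hz.1, hz.2]

section Gmap

variable {K : ℝ} {κ : ℂ} {p : Addr × ℝ}

theorem gmap_succ_mem_Zbox_of_norm_le (hκ : ‖κ‖ ≤ K) (hp : p ∈ Yset (Qconst K)) {k : ℕ}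
    (hk : ‖gmap κ k (Fmod p) - Zc (Fmod p)‖ ≤ π + 2) : gmap κ (k + 1) p ∈ Zbox p := by
  obtain ⟨-, harg, hlog⟩ := log_estimates_of_mem_Yset hκ hp hk
  have : gmap κ (k + 1) p - Zc p = Complex.log (gmap κ k (Fmod p) - κ) - p.2 := by
    simp only [gmap, Zc]
    ring
  rw [Zbox, Set.mem_ofPred_eq, this]
  simp only [Complex.sub_re, Complex.log_re, Complex.ofReal_re, Complex.sub_im, Complex.log_im,
    Complex.ofReal_im, sub_zero]
  exact ⟨hlog, harg⟩

theorem norm_gmap_sub_Zc_le (hκ : ‖κ‖ ≤ K) (k : ℕ) :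
    ∀ p ∈ Yset (Qconst K), ‖gmap κ k p - Zc p‖ ≤ π + 2 := by
  induction k with
  | zero => exact fun p _ => by simp [gmap]; positivity
  | succ k ih =>
    intro p hp
    exact norm_sub_Zc_le_of_mem_Zbox
      (gmap_succ_mem_Zbox_of_norm_le hκ hp (ih _ (mapsTo_Fmod_Yset _ hp)))

theorem gmap_succ_mem_Zbox (hκ : ‖κ‖ ≤ K) (hp : p ∈ Yset (Qconst K)) (k : ℕ) :
    gmap κ (k + 1) p ∈ Zbox p :=
  gmap_succ_mem_Zbox_of_norm_le hκ hp (norm_gmap_sub_Zc_le hκ k _ (mapsTo_Fmod_Yset _ hp))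

theorem continuousOn_gmap (hκ : ‖κ‖ ≤ K) (k : ℕ) : ContinuousOn (gmap κ k) (Yset (Qconst K)) := by
  induction k with
  | zero => exact continuous_Zc.continuousOn
  | succ k ih =>
    have hslit : ∀ p ∈ Yset (Qconst K), gmap κ k (Fmod p) - κ ∈ Complex.slitPlane := fun p hp =>
      (log_estimates_of_mem_Yset hκ hp (norm_gmap_sub_Zc_le hκ k _ (mapsTo_Fmod_Yset _ hp))).1
    have hF := ih.comp continuous_Fmod.continuousOn (mapsTo_Fmod_Yset _)
    exact ((hF.sub continuousOn_const).clog hslit).add (Continuous.continuousOn (by fun_prop))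

end Gmap

theorem iterate_apply_eq_of_semiconj_on {α β : Type*} {f : α → α} {F : β → β} {h : α → β}
    {s : Set α} (hs : Set.MapsTo f s s) (hh : ∀ x ∈ s, h (f x) = F (h x)) {x : α} (hx : x ∈ s)
    (n : ℕ) : h (f^[n] x) = F^[n] (h x) := by
  induction n with
  | zero => rfl
  | succ n ih => rw [Function.iterate_succ_apply', Function.iterate_succ_apply',
      hh _ (hs.iterate n hx), ih]

theorem abs_snd_sub_le_of_mem_Zbox {p q : Addr × ℝ} {z w : ℂ} (hz : z ∈ Zbox q)
    (hw : w ∈ Zbox p) : |q.2 - p.2| ≤ ‖z - w‖ + 4 := by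
  have hre := Complex.abs_re_le_norm (z - w)
  simp only [Zbox, Set.mem_ofPred_eq, Complex.sub_re, Zc_re] at hz hw hre
  rw [abs_le] at hz hw hre ⊢
  constructor <;> linarith [hz.1, hw.1]

-- boxes around different values of `s₁` are `2π - 2 (π - 2/5) = 4/5` apart
theorem ofLex_zero_eq_of_mem_Zbox {p q : Addr × ℝ} {z w : ℂ} (hz : z ∈ Zbox q)
    (hw : w ∈ Zbox p) (hzw : ‖z - w‖ < 4 / 5) : ofLex q.1 0 = ofLex p.1 0 := by
  have him := (Complex.abs_im_le_norm (z - w)).trans_lt hzw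
  simp only [Zbox, Set.mem_ofPred_eq, Complex.sub_im, Zc_im] at hz hw him
  have hz' := abs_le.1 hz.2
  have hw' := abs_le.1 hw.2
  have him' := abs_lt.1 him
  have : |((ofLex q.1 0 - ofLex p.1 0 : ℤ) : ℝ)| < 1 := by
    rw [abs_lt]
    push_cast
    constructor <;> nlinarith [pi_pos]
  exact sub_eq_zero.1 (Int.abs_lt_one_iff.1 (by exact_mod_cast this))

theorem im_mem_Ioo_of_mem_Zbox {p : Addr × ℝ} {z : ℂ} (hz : z ∈ Zbox p) :
    z.im ∈ Set.Ioo ((2 * (ofLex p.1 0 : ℝ) - 1) * π) ((2 * (ofLex p.1 0 : ℝ) + 1) * π) := by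
  have := abs_le.1 hz.2
  simp only [Complex.sub_im, Zc_im] at this
  constructor <;> linarith

theorem norm_Eexp_le (κ z : ℂ) : ‖Eexp κ z‖ ≤ exp z.re + ‖κ‖ :=
  (norm_add_le _ _).trans_eq (by rw [Complex.norm_exp])

section Limit

variable {K : ℝ} {κ : ℂ} {g : Addr × ℝ → ℂ} {p q : Addr × ℝ}

theorem mem_Zbox_of_tendstoUniformlyOn (hκ : ‖κ‖ ≤ K)
    (hg : TendstoUniformlyOn (gmap κ) g atTop (Yset (Qconst K))) (hp : p ∈ Yset (Qconst K)) :
    g p ∈ Zbox p :=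
  (isClosed_Zbox p).mem_of_tendsto ((hg.tendsto_at hp).comp (tendsto_add_atTop_nat 1))
    (Eventually.of_forall fun k => gmap_succ_mem_Zbox hκ hp k)

theorem mem_cylSet_and_pow_two_mul_lt (hκ : ‖κ‖ ≤ K)
    (hg : TendstoUniformlyOn (gmap κ) g atTop (Yset (Qconst K)))
    (hp : p ∈ Yset (Qconst K)) (hq : q ∈ Yset (Qconst K)) {m : ℕ}
    (hclose : ∀ j ≤ m, ‖g (Fmod^[j] q) - g (Fmod^[j] p)‖ < 4 / 5) :
    q.1 ∈ cylSet m p.1 ∧ 2 ^ m * |q.2 - p.2| < 5 := by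
  have hbox : ∀ {r}, r ∈ Yset (Qconst K) → ∀ j, g (Fmod^[j] r) ∈ Zbox (Fmod^[j] r) :=
    fun hr j => mem_Zbox_of_tendstoUniformlyOn hκ hg ((mapsTo_Fmod_Yset _).iterate j hr)
  have hcyl : q.1 ∈ cylSet m p.1 := fun j hj => by
    have := ofLex_zero_eq_of_mem_Zbox (hbox hq j) (hbox hp j) (hclose j hj)
    rwa [ofLex_iterate_Fmod_fst, ofLex_iterate_Fmod_fst, zero_add] at this
  refine ⟨hcyl, ?_⟩
  calc 2 ^ m * |q.2 - p.2| ≤ |(Fmod^[m] q).2 - (Fmod^[m] p).2| :=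
        pow_two_mul_abs_sub_le (one_le_Qconst K) hp hq hcyl
    _ ≤ ‖g (Fmod^[m] q) - g (Fmod^[m] p)‖ + 4 :=
        abs_snd_sub_le_of_mem_Zbox (hbox hq m) (hbox hp m)
    _ < 5 := by linarith [hclose m le_rfl]

theorem injOn_of_tendstoUniformlyOn (hκ : ‖κ‖ ≤ K)
    (hg : TendstoUniformlyOn (gmap κ) g atTop (Yset (Qconst K)))
    (hconj : ∀ p ∈ Yset (Qconst K), g (Fmod p) = Eexp κ (g p)) :
    Set.InjOn g (Yset (Qconst K)) := by
  intro q hq p hp hqp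
  have hclose : ∀ m, q.1 ∈ cylSet m p.1 ∧ 2 ^ m * |q.2 - p.2| < 5 := fun m =>
    mem_cylSet_and_pow_two_mul_lt hκ hg hp hq fun j _ => by
      rw [iterate_apply_eq_of_semiconj_on (mapsTo_Fmod_Yset _) hconj hq,
        iterate_apply_eq_of_semiconj_on (mapsTo_Fmod_Yset _) hconj hp, hqp, sub_self, norm_zero]
      norm_num
  have hsnd : q.2 = p.2 := by
    by_contra hne
    have hpos : 0 < |q.2 - p.2| := abs_pos.2 (sub_ne_zero.2 hne)
    obtain ⟨m, hm⟩ := pow_unbounded_of_one_lt (5 / |q.2 - p.2|) one_lt_two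
    rw [div_lt_iff₀ hpos] at hm
    linarith [(hclose m).2]
  exact Prod.ext (ofLex.injective (funext fun i => (hclose i).1 i le_rfl)) hsnd

theorem mem_escapingSet_iff (hκ : ‖κ‖ ≤ K)
    (hg : TendstoUniformlyOn (gmap κ) g atTop (Yset (Qconst K)))
    (hconj : ∀ p ∈ Yset (Qconst K), g (Fmod p) = Eexp κ (g p)) (hp : p ∈ Yset (Qconst K)) :
    g p ∈ escapingSet κ ↔ p ∈ Xset := by
  have horbit : ∀ n, (Eexp κ)^[n] (g p) = g (Fmod^[n] p) := fun n =>
    (iterate_apply_eq_of_semiconj_on (mapsTo_Fmod_Yset _) hconj hp n).symm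
  have hre : ∀ n, |(g (Fmod^[n] p)).re - (Fmod^[n] p).2| ≤ 2 := fun n => by
    simpa using (mem_Zbox_of_tendstoUniformlyOn hκ hg ((mapsTo_Fmod_Yset _).iterate n hp)).1
  refine ⟨fun hesc => ⟨hp.1, ?_⟩, fun hX => ?_⟩
  · have hnext : Tendsto (fun n => exp ((Fmod^[n] p).2 + 2) + ‖κ‖) atTop atTop := by
      refine tendsto_atTop_mono (fun n => ?_) (hesc.comp (tendsto_add_atTop_nat 1))
      rw [Function.comp_apply, Function.iterate_succ_apply', horbit]
      exact (norm_Eexp_le κ _).trans (by gcongr; linarith [(abs_le.1 (hre n)).2])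
    have := tendsto_log_atTop.comp (tendsto_atTop_add_const_right _ (-‖κ‖) hnext)
    simpa using tendsto_atTop_add_const_right _ (-2) this
  · refine tendsto_atTop_mono (fun n => ?_) (tendsto_atTop_add_const_right _ (-2) hX.2)
    rw [horbit]
    linarith [(abs_le.1 (hre n)).1, Complex.re_le_norm (g (Fmod^[n] p))]

theorem eventually_mem_of_apply_eq (hκ : ‖κ‖ ≤ K)
    (hg : TendstoUniformlyOn (gmap κ) g atTop (Yset (Qconst K)))
    (hconj : ∀ p ∈ Yset (Qconst K), g (Fmod p) = Eexp κ (g p)) (hp : p ∈ Yset (Qconst K))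
    (n : ℕ) {δ : ℝ} (hδ : 0 < δ) :
    ∀ᶠ z in 𝓝 (g p), ∀ q ∈ Yset (Qconst K), g q = z →
      q ∈ cylSet n p.1 ×ˢ Metric.ball p.2 δ := by
  obtain ⟨m₀, hm₀⟩ := pow_unbounded_of_one_lt (5 / δ) one_lt_two
  set m := max n m₀
  have hm : 5 / δ < 2 ^ m := hm₀.trans_le (pow_le_pow_right₀ one_le_two (le_max_right _ _))
  have hcont : ∀ j, Continuous (Eexp κ)^[j] := fun j =>
    (Complex.continuous_exp.add continuous_const).iterate j
  have hev : ∀ᶠ z in 𝓝 (g p), ∀ j ∈ Set.Iic m,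
      dist ((Eexp κ)^[j] z) ((Eexp κ)^[j] (g p)) < 4 / 5 :=
    (eventually_all_finite (Set.finite_Iic m)).2 fun j _ =>
      Metric.tendsto_nhds.1 ((hcont j).tendsto _) _ (by norm_num)
  filter_upwards [hev] with z hz q hq hqz
  obtain ⟨hcyl, hsnd⟩ := mem_cylSet_and_pow_two_mul_lt hκ hg hp hq fun j hj => by
    rw [iterate_apply_eq_of_semiconj_on (mapsTo_Fmod_Yset _) hconj hq,
      iterate_apply_eq_of_semiconj_on (mapsTo_Fmod_Yset _) hconj hp, hqz, ← dist_eq_norm]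
    exact hz j hj
  refine ⟨cylSet_subset_cylSet (le_max_left _ _) _ hcyl, ?_⟩
  rw [div_lt_iff₀ hδ] at hm
  rw [Metric.mem_ball, Real.dist_eq]
  nlinarith [abs_nonneg (q.2 - p.2)]

theorem isEmbedding_domRestrict_of_tendstoUniformlyOn (hκ : ‖κ‖ ≤ K)
    (hg : TendstoUniformlyOn (gmap κ) g atTop (Yset (Qconst K)))
    (hconj : ∀ p ∈ Yset (Qconst K), g (Fmod p) = Eexp κ (g p)) :
    IsEmbedding ((Yset (Qconst K)).domRestrict g) := by
  have hcont : ContinuousOn g (Yset (Qconst K)) :=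
    hg.continuousOn (Eventually.of_forall (continuousOn_gmap hκ)).frequently
  refine ⟨isInducing_iff_nhds.2 fun x => le_antisymm (hcont.domRestrict.tendsto x).le_comap ?_,
    (injOn_of_tendstoUniformlyOn hκ hg hconj).injective⟩
  rw [nhds_subtype_eq_comap]
  refine (((nhds_basis_cylSet _).prod_nhds Metric.nhds_basis_ball).comap _).ge_iff.2
    fun ⟨n, δ⟩ ⟨_, hδ⟩ => mem_comap'.2 ?_
  filter_upwards [eventually_mem_of_apply_eq hκ hg hconj x.2 n hδ] with z hz y hyz
  exact hz y y.2 hyz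

end Limit

theorem gmap_limit_embedding_general (κ : ℂ) (K : ℝ)
    (hκ : ‖κ‖ ≤ K) (g : Addr × ℝ → ℂ)
    (hg : TendstoUniformlyOn (gmap κ) g atTop (Yset (Qconst K)))
    (hconj : ∀ p ∈ Yset (Qconst K), g (Fmod p) = Eexp κ (g p)) :
    Set.InjOn g (Yset (Qconst K)) ∧
    Topology.IsEmbedding ((Yset (Qconst K)).restrict g) ∧
    (∀ p ∈ Yset (Qconst K), (g p ∈ escapingSet κ ↔ p ∈ Xset)) ∧
    (∀ p ∈ Yset (Qconst K), ∀ n : ℕ, 1 ≤ n →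
      ((Eexp κ)^[n - 1] (g p)).im ∈
        Set.Ioo ((2 * ((ofLex p.1 (n - 1) : ℤ) : ℝ) - 1) * Real.pi)
                ((2 * ((ofLex p.1 (n - 1) : ℤ) : ℝ) + 1) * Real.pi)) := by
  refine ⟨injOn_of_tendstoUniformlyOn hκ hg hconj,
    isEmbedding_domRestrict_of_tendstoUniformlyOn hκ hg hconj,
    fun p hp => mem_escapingSet_iff hκ hg hconj hp, fun p hp n _ => ?_⟩
  have hpn := (mapsTo_Fmod_Yset _).iterate (n - 1) hp
  have hbox := im_mem_Ioo_of_mem_Zbox (mem_Zbox_of_tendstoUniformlyOn hκ hg hpn)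
  rwa [ofLex_iterate_Fmod_fst, zero_add,
    iterate_apply_eq_of_semiconj_on (mapsTo_Fmod_Yset _) hconj hp] at hbox

/-- **Properties of the limit map `𝔤`** (Theorem 4.2, second part): the uniform limit `𝔤`
of the `𝔤_k` on `Y` is injective on `Y` and a homeomorphism of `Y` onto its image
(with `ℤ^ℕ` carrying the lexicographic order topology and the product topology on
`ℤ^ℕ × ℝ`); moreover `𝔤(s,t) ∈ I(E_κ)` iff `(s,t) ∈ X`, and `𝔤(s,t)` has external
address `s`. -/
theorem gmap_limit_embedding (κ : ℂ) (K : ℝ) (hK : 2 * Real.pi + 6 < K)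
    (hκ : ‖κ‖ ≤ K) (g : Addr × ℝ → ℂ)
    (hg : TendstoUniformlyOn (gmap κ) g atTop (Yset (Qconst K)))
    (hconj : ∀ p ∈ Yset (Qconst K), g (Fmod p) = Eexp κ (g p)) :
    Set.InjOn g (Yset (Qconst K)) ∧
    Topology.IsEmbedding ((Yset (Qconst K)).restrict g) ∧
    (∀ p ∈ Yset (Qconst K), (g p ∈ escapingSet κ ↔ p ∈ Xset)) ∧
    (∀ p ∈ Yset (Qconst K), ∀ n : ℕ, 1 ≤ n →
      ((Eexp κ)^[n - 1] (g p)).im ∈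
        Set.Ioo ((2 * ((ofLex p.1 (n - 1) : ℤ) : ℝ) - 1) * Real.pi)
                ((2 * ((ofLex p.1 (n - 1) : ℤ) : ℝ) + 1) * Real.pi)) :=
  gmap_limit_embedding_general κ K hκ g hg hconj
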